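/- arXiv:1405.6664 — 3 statements merged into one kernel-verified Lean document; each statement's English description precedes it below -/
import Mathlib

section
/- Let m, p be positive integers and let Y be a real m×p matrix of rank m. Then the minimum of ‖X‖₀ over all pairs (D, X) with D ∈ ℝ^{m×m}, X ∈ ℝ^{m×p} and D·X = Y equals the minimum of ‖B·Y‖₀ over all invertible matrices B ∈ ℝ^{m×m}. (Formally: the set {‖X‖₀ : ∃ D ∈ ℝ^{m×m}, D·X = Y} of natural numbers and the set {‖B·Y‖₀ : B ∈ ℝ^{m×m} invertible} have the same minimum, both sets being nonempty.) -/
/-- The `ℓ₀`-"norm" of a matrix: the number of its nonzero entries. -/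
noncomputable def matL0 {m p : ℕ} (X : Matrix (Fin m) (Fin p) ℝ) : ℕ :=
  {ij : Fin m × Fin p | X ij.1 ij.2 ≠ 0}.ncard

lemma isUnit_of_rank_eq {m : ℕ} (D : Matrix (Fin m) (Fin m) ℝ) (h : D.rank = m) :
    IsUnit D := by
  rw [← Matrix.mulVec_surjective_iff_isUnit]
  have : LinearMap.range D.mulVecLin = ⊤ := by
    apply Submodule.eq_top_of_finrank_eq
    rw [← Matrix.rank, h]
    simp [Module.finrank_fintype_fun_eq_card]
  intro y
  have := this ▸ LinearMap.mem_range (f := D.mulVecLin) (x := y) |>.symm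
  exact (this.mpr Submodule.mem_top)

/-- For `Y : ℝ^{m×p}` of rank `m`, the minimum of `‖X‖₀` over pairs `(D, X)`
with `D ∈ ℝ^{m×m}` and `D·X = Y` equals the minimum of `‖B·Y‖₀` over invertible
`B ∈ ℝ^{m×m}`; both sets of attained values are nonempty. -/
theorem dl_square_eq_matrix_sparsification (m p : ℕ) (hm : 0 < m) (hp : 0 < p)
    (Y : Matrix (Fin m) (Fin p) ℝ) (hY : Y.rank = m) :
    {k : ℕ | ∃ (D : Matrix (Fin m) (Fin m) ℝ) (X : Matrix (Fin m) (Fin p) ℝ),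
        D * X = Y ∧ matL0 X = k}.Nonempty ∧
    {k : ℕ | ∃ B : Matrix (Fin m) (Fin m) ℝ, IsUnit B ∧ matL0 (B * Y) = k}.Nonempty ∧
    sInf {k : ℕ | ∃ (D : Matrix (Fin m) (Fin m) ℝ) (X : Matrix (Fin m) (Fin p) ℝ),
        D * X = Y ∧ matL0 X = k} =
      sInf {k : ℕ | ∃ B : Matrix (Fin m) (Fin m) ℝ, IsUnit B ∧ matL0 (B * Y) = k} := by
  refine ⟨⟨matL0 Y, 1, Y, by simp, rfl⟩, ⟨matL0 Y, 1, isUnit_one, by simp⟩, ?_⟩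
  congr 1
  ext k
  constructor
  · rintro ⟨D, X, hDX, rfl⟩
    have hD : IsUnit D := by
      apply isUnit_of_rank_eq
      refine le_antisymm ?_ ?_
      · simpa using D.rank_le_card_width
      · calc m = Y.rank := hY.symm
          _ ≤ D.rank := hDX ▸ Matrix.rank_mul_le_left D X
    obtain ⟨u, rfl⟩ := hD
    refine ⟨(u⁻¹ : (Matrix (Fin m) (Fin m) ℝ)ˣ), (Units.isUnit _), ?_⟩
    have : ((u⁻¹ : (Matrix (Fin m) (Fin m) ℝ)ˣ) : Matrix (Fin m) (Fin m) ℝ) * Y = X := by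
      rw [← hDX, ← Matrix.mul_assoc, Units.inv_mul, Matrix.one_mul]
    rw [this]
  · rintro ⟨B, hB, rfl⟩
    obtain ⟨u, rfl⟩ := hB
    exact ⟨(u⁻¹ : (Matrix (Fin m) (Fin m) ℝ)ˣ), (u : Matrix (Fin m) (Fin m) ℝ) * Y,
      by rw [← Matrix.mul_assoc, Units.inv_mul, Matrix.one_mul], rfl⟩
end

section
/- Let m, p be positive integers, let Y be a real m×p matrix of rank m, and suppose (D*, X*) with D* ∈ ℝ^{m×m}, X* ∈ ℝ^{m×p} satisfies D*·X* = Y and ‖X*‖₀ ≤ ‖X‖₀ for every pair (D, X) with D·X = Y. Then D* is invertible, the matrix B* := (D*)⁻¹ satisfies B*·Y = X*, and B* is an optimal solution of the matrix sparsification problem, i.e., ‖B*·Y‖₀ ≤ ‖B·Y‖₀ for every invertible B ∈ ℝ^{m×m}. -/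
/-- If `(D*, X*)` is an optimal solution of the square dictionary learning
problem for a full row-rank `Y`, then `D*` is invertible, `B* := (D*)⁻¹` satisfies
`B*·Y = X*`, and `B*` is optimal for the matrix sparsification problem. -/
theorem dl_optimal_gives_ms_optimal (m p : ℕ) (hm : 0 < m) (hp : 0 < p)
    (Y : Matrix (Fin m) (Fin p) ℝ) (hY : Y.rank = m)
    (Dstar : Matrix (Fin m) (Fin m) ℝ) (Xstar : Matrix (Fin m) (Fin p) ℝ)
    (hfeas : Dstar * Xstar = Y)
    (hopt : ∀ (D : Matrix (Fin m) (Fin m) ℝ) (X : Matrix (Fin m) (Fin p) ℝ),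
      D * X = Y → matL0 Xstar ≤ matL0 X) :
    IsUnit Dstar ∧ Dstar⁻¹ * Y = Xstar ∧
      ∀ B : Matrix (Fin m) (Fin m) ℝ, IsUnit B →
        matL0 (Dstar⁻¹ * Y) ≤ matL0 (B * Y) := by
  have hrank : Dstar.rank = m := by
    refine le_antisymm (Dstar.rank_le_width) ?_
    calc m = Y.rank := hY.symm
    _ = (Dstar * Xstar).rank := by rw [hfeas]
    _ ≤ Dstar.rank := Matrix.rank_mul_le_left _ _
  have hunit : IsUnit Dstar := by
    rw [← Matrix.mulVec_surjective_iff_isUnit]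
    have : LinearMap.range Dstar.mulVecLin = ⊤ := by
      apply Submodule.eq_top_of_finrank_eq
      rw [show (Module.finrank ℝ ↥(LinearMap.range Dstar.mulVecLin)) = Dstar.rank from rfl,
        hrank]
      simp [Module.finrank_pi]
    intro v
    obtain ⟨w, hw⟩ := (LinearMap.range_eq_top.mp this) v
    exact ⟨w, hw⟩
  have hdet : IsUnit Dstar.det := (Matrix.isUnit_iff_isUnit_det _).mp hunit
  have hBY : Dstar⁻¹ * Y = Xstar := by
    rw [← hfeas, ← Matrix.mul_assoc, Matrix.nonsing_inv_mul _ hdet, Matrix.one_mul]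
  refine ⟨hunit, hBY, ?_⟩
  intro B hB
  rw [hBY]
  exact hopt B⁻¹ (B * Y) (by
    rw [← Matrix.mul_assoc, Matrix.nonsing_inv_mul _ ((Matrix.isUnit_iff_isUnit_det _).mp hB),
      Matrix.one_mul])
end

section
/- Let S be a finite nonempty set with m elements, let C₁, …, C_n be subsets of S, and let D ∈ ℝ^{m×n} be the associated incidence matrix (D_{ij} = 1 if the i-th element of S lies in C_j, else 0). Then: (i) if there is an exact cover of S of cardinality k (from C₁, …, C_n), then there exists x ∈ ℝ^n with D·x = 𝟙 and ‖x‖₀ ≤ k; and (ii) if every cover of S (from C₁, …, C_n) has cardinality at least t, then every x ∈ ℝ^n with D·x = 𝟙 satisfies ‖x‖₀ ≥ t. Here 𝟙 denotes the all-ones vector in ℝ^m. -/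
/-- The `ℓ₀`-"norm" of a vector: the number of its nonzero entries. -/
noncomputable def vecL0 {n : ℕ} (x : Fin n → ℝ) : ℕ :=
  {j : Fin n | x j ≠ 0}.ncard

/-- With `S = {s₁,…,s_m}` (identified with `Fin m`, `m > 0`), subsets
`C₁,…,C_n ⊆ S` and their incidence matrix `D`:
(i) an exact cover of cardinality `k` yields `x` with `D·x = 𝟙` and `‖x‖₀ ≤ k`;
(ii) if every cover has cardinality at least `t`, then every solution `x` of `D·x = 𝟙`
satisfies `‖x‖₀ ≥ t`. -/
theorem set_cover_sparse_recovery_correspondence (m n : ℕ) (hm : 0 < m)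
    (C : Fin n → Finset (Fin m))
    (D : Matrix (Fin m) (Fin n) ℝ)
    (hD : ∀ i j, D i j = if i ∈ C j then 1 else 0) :
    (∀ k : ℕ,
      (∃ J : Finset (Fin n), (∀ i : Fin m, ∃! j : Fin n, j ∈ J ∧ i ∈ C j) ∧ J.card = k) →
      ∃ x : Fin n → ℝ, D.mulVec x = (fun _ => 1) ∧ vecL0 x ≤ k) ∧
    (∀ t : ℕ,
      (∀ J : Finset (Fin n), (∀ i : Fin m, ∃ j ∈ J, i ∈ C j) → t ≤ J.card) →
      ∀ x : Fin n → ℝ, D.mulVec x = (fun _ => 1) → t ≤ vecL0 x) := by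
  constructor
  · rintro k ⟨J, hJ, rfl⟩
    refine ⟨fun j => if j ∈ J then 1 else 0, ?_, ?_⟩
    · funext i
      obtain ⟨j₀, ⟨hj₀J, hj₀C⟩, huniq⟩ := hJ i
      simp only [Matrix.mulVec, dotProduct, hD]
      rw [Finset.sum_eq_single j₀]
      · simp [hj₀J, hj₀C]
      · intro j _ hne
        rcases eq_or_ne (if i ∈ C j then (1:ℝ) else 0) 0 with h | h
        · simp [h]
        · have hic : i ∈ C j := by by_contra hc; simp [hc] at h
          by_cases hjJ : j ∈ J
          · exact absurd (huniq j ⟨hjJ, hic⟩) hne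
          · simp [hjJ]
      · simp
    · unfold vecL0
      have hsub : {j : Fin n | (if j ∈ J then (1:ℝ) else 0) ≠ 0} ⊆ (J : Set (Fin n)) := by
        intro j hj
        by_contra hc
        simp [hc] at hj
      calc {j : Fin n | (if j ∈ J then (1:ℝ) else 0) ≠ 0}.ncard
          ≤ (J : Set (Fin n)).ncard := Set.ncard_le_ncard hsub J.finite_toSet
        _ = J.card := by simp [Set.ncard_coe_finset]
  · intro t ht x hx
    set J : Finset (Fin n) := Finset.univ.filter (fun j => x j ≠ 0) with hJdef
    have hcover : ∀ i : Fin m, ∃ j ∈ J, i ∈ C j := by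
      intro i
      have h1 : D.mulVec x i = 1 := by rw [hx]
      by_contra hc
      push_neg at hc
      have : D.mulVec x i = 0 := by
        simp only [Matrix.mulVec, dotProduct, hD]
        apply Finset.sum_eq_zero
        intro j _
        by_cases hic : i ∈ C j
        · have : x j = 0 := by
            by_contra hxj
            exact hc j (by simp [hJdef, hxj]) hic
          simp [this]
        · simp [hic]
      rw [this] at h1; norm_num at h1
    have := ht J hcover
    have hcard : J.card = vecL0 x := by
      unfold vecL0
      rw [← Set.ncard_coe_finset]
      congr 1
      ext j
      simp [hJdef]
    omega
end
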